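/- arXiv:2202.10133 — 3 statements merged into one kernel-verified Lean document; each statement's English description precedes it below -/
import Mathlib

section
/- Let d be a positive integer and let A be a real d×d matrix. The matrix family (exp(tA))_{t ≥ 0} is positive (i.e., every entry of exp(tA) is ≥ 0 for every t ≥ 0) if and only if every off-diagonal entry of A is ≥ 0 (i.e., A j k ≥ 0 for all indices j ≠ k). -/
/-!
If the off-diagonal entries of `A` are nonnegative, then `B = A + c • 1` is entrywise nonnegative
for `c` large, hence so are its powers and `exp B`; as `c • 1` is central,
`exp A = e⁻ᶜ • exp B`. Conversely, for `j ≠ k` the entry `t ↦ exp (t • A) j k` vanishes at `0`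
and is nonnegative for `t ≥ 0`, so its derivative `A j k` at `0` is nonnegative.
-/

open NormedSpace Set

theorem IsClosed.matrix {m n R : Type*} [TopologicalSpace R] {S : Set R} (hS : IsClosed S) :
    IsClosed (S.matrix : Set (Matrix m n R)) :=
  Set.matrix_eq_pi ▸
    (isClosed_set_pi fun _ _ => isClosed_set_pi fun _ _ => hS).preimage continuous_id

theorem HasDerivAt.nonneg_of_isMinOn_Ici {f : ℝ → ℝ} {f' a : ℝ} (hf : HasDerivAt f f' a)
    (hmin : IsMinOn f (Ici a) a) : 0 ≤ f' := by
  have hcone : (1 : ℝ) ∈ posTangentConeAt (Ici a) a :=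
    mem_posTangentConeAt_of_segment_subset <|
      (segment_subset_Icc (by linarith)).trans Icc_subset_Ici_self
  simpa using hmin.localize.hasFDerivWithinAt_nonneg hf.hasFDerivAt.hasFDerivWithinAt hcone

namespace Matrix

variable {n : Type*} [Fintype n] [DecidableEq n]

theorem exp_mem_nonneg_matrix {𝕜 : Type*} [Field 𝕜] [LinearOrder 𝕜] [IsStrictOrderedRing 𝕜]
    [TopologicalSpace 𝕜] [IsTopologicalRing 𝕜] [OrderClosedTopology 𝕜] {M : Matrix n n 𝕜}
    (hM : M ∈ (Subsemiring.nonneg 𝕜).matrix) : exp M ∈ (Subsemiring.nonneg 𝕜).matrix := by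
  rw [exp_eq_tsum 𝕜]
  refine tsum_mem isClosed_Ici.matrix fun k i j => ?_
  exact mul_nonneg (by positivity) (pow_mem hM k i j)

theorem exists_add_smul_one_mem_nonneg_matrix {R : Type*} [Ring R] [LinearOrder R]
    [IsOrderedRing R] {A : Matrix n n R} (hA : ∀ i j, i ≠ j → 0 ≤ A i j) :
    ∃ c : R, A + c • 1 ∈ (Subsemiring.nonneg R).matrix := by
  obtain ⟨c, hc⟩ := Finite.exists_le fun i => -A i i
  refine ⟨c, fun i j => ?_⟩
  rcases eq_or_ne i j with rfl | hij
  · simpa [add_comm, neg_le_iff_add_nonneg] using hc i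
  · simpa [hij] using hA i j hij

theorem exp_smul_one (c : ℝ) : exp (c • (1 : Matrix n n ℝ)) = Real.exp c • 1 := by
  rw [smul_one_eq_diagonal, exp_diagonal, Pi.exp_def, smul_one_eq_diagonal, Real.exp_eq_exp_ℝ]

theorem exp_mem_nonneg_matrix_of_offdiag_nonneg {A : Matrix n n ℝ}
    (hA : ∀ i j, i ≠ j → 0 ≤ A i j) : exp A ∈ (Subsemiring.nonneg ℝ).matrix := by
  obtain ⟨c, hc⟩ := exists_add_smul_one_mem_nonneg_matrix hA
  have hcomm : Commute (A + c • 1) ((-c) • 1) := (Commute.one_right _).smul_right _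
  have hsplit : exp A = Real.exp (-c) • exp (A + c • 1) :=
    calc exp A = exp ((A + c • 1) + (-c) • 1) := by congr 1; module
      _ = exp (A + c • 1) * exp ((-c) • 1) := exp_add_of_commute _ _ hcomm
      _ = Real.exp (-c) • exp (A + c • 1) := by rw [exp_smul_one, Matrix.mul_smul, mul_one]
  rw [hsplit]
  exact fun i j => mul_nonneg (Real.exp_pos _).le (exp_mem_nonneg_matrix hc i j)

open scoped Norms.Operator in
theorem hasDerivAt_exp_smul_apply_zero (A : Matrix n n ℝ) (i j : n) :
    HasDerivAt (fun t : ℝ => exp (t • A) i j) (A i j) 0 := by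
  have h := hasDerivAt_exp_smul_const A (0 : ℝ)
  rw [zero_smul, exp_zero, one_mul] at h
  exact (entryLinearMap ℝ ℝ i j).toContinuousLinearMap.hasFDerivAt.comp_hasDerivAt 0 h

theorem offdiag_nonneg_of_exp_smul_mem_nonneg_matrix {A : Matrix n n ℝ}
    (h : ∀ t : ℝ, 0 ≤ t → exp (t • A) ∈ (Subsemiring.nonneg ℝ).matrix) {i j : n} (hij : i ≠ j) :
    0 ≤ A i j := by
  refine (hasDerivAt_exp_smul_apply_zero A i j).nonneg_of_isMinOn_Ici fun t (ht : 0 ≤ t) => ?_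
  simpa [one_apply_ne hij] using h t ht i j

end Matrix

theorem exp_smul_entries_nonneg_iff_offdiag_nonneg_general
    (d : ℕ) (A : Matrix (Fin d) (Fin d) ℝ) :
    (∀ t : ℝ, 0 ≤ t → ∀ j k : Fin d, 0 ≤ exp (t • A) j k) ↔
      (∀ j k : Fin d, j ≠ k → 0 ≤ A j k) :=
  ⟨fun h _ _ => Matrix.offdiag_nonneg_of_exp_smul_mem_nonneg_matrix h,
    fun hA _ ht => Matrix.exp_mem_nonneg_matrix_of_offdiag_nonneg
      fun j k hjk => mul_nonneg ht (hA j k hjk)⟩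

/-- For a real `d × d` matrix `A`, the family `(exp(tA))_{t ≥ 0}` is positive
(all entries of `exp (t • A)` are nonnegative for every `t ≥ 0`) if and only if
every off-diagonal entry of `A` is nonnegative. -/
theorem exp_smul_entries_nonneg_iff_offdiag_nonneg
    (d : ℕ) (hd : 0 < d) (A : Matrix (Fin d) (Fin d) ℝ) :
    (∀ t : ℝ, 0 ≤ t → ∀ j k : Fin d, 0 ≤ exp (t • A) j k) ↔
      (∀ j k : Fin d, j ≠ k → 0 ≤ A j k) :=
  exp_smul_entries_nonneg_iff_offdiag_nonneg_general d A
end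

section
/- Let v₁ = (1/√3)·(1,1,1), v₂ = (1/√2)·(−1,0,1), v₃ = (1/√6)·(1,−2,1) in ℝ³, let V be the 3×3 matrix with columns v₁, v₂, v₃, let R be the 3×3 matrix with rows (0,0,0), (0,−1,−1), (0,1,−1), and let A = V R Vᵀ. Then exp(tA) converges, as t → ∞, to the 3×3 matrix all of whose entries equal 1/3 (i.e., to v₁·v₁ᵀ). -/
/-!
Since `V` is orthogonal, `exp (t • A) = V * exp (t • R) * Vᵀ`. Split `R = D + S` with
`D = diag(0, -1, -1)` and `S` the skew-symmetric generator of rotations in the last two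
coordinates; `D` and `S` commute, so `exp (t • R) = exp (t • D) * exp (t • S)`. The factor
`exp (t • S)` is orthogonal, hence an isometry for the operator norm, while
`exp (t • D) → P = diag(1, 0, 0)` and `P * exp (t • S) = P` because `P * S = 0`. Therefore
`exp (t • R) → P`, and `V * P * Vᵀ = v₁ v₁ᵀ`.
-/

open NormedSpace Filter Matrix

noncomputable def exVecV : Matrix (Fin 3) (Fin 3) ℝ :=
  !![1 / Real.sqrt 3, -1 / Real.sqrt 2,  1 / Real.sqrt 6;
     1 / Real.sqrt 3,  0,               -2 / Real.sqrt 6;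
     1 / Real.sqrt 3,  1 / Real.sqrt 2,  1 / Real.sqrt 6]

def exMatR : Matrix (Fin 3) (Fin 3) ℝ :=
  !![0,  0,  0;
     0, -1, -1;
     0,  1, -1]

open scoped Topology

section

variable {n : Type*} [Fintype n] [DecidableEq n]

theorem Matrix.exp_mem_orthogonalGroup_of_transpose_eq_neg {S : Matrix n n ℝ} (hS : Sᵀ = -S) :
    exp S ∈ orthogonalGroup n ℝ := by
  rw [mem_orthogonalGroup_iff, ← exp_transpose, hS, exp_neg]
  exact mul_nonsing_inv _ ((isUnit_exp S).map detMonoidHom)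

theorem Matrix.exp_conj_of_mul_transpose_eq_one {U : Matrix n n ℝ} (hU : U * Uᵀ = 1)
    (A : Matrix n n ℝ) : exp (U * A * Uᵀ) = U * exp A * Uᵀ := by
  rw [← inv_eq_right_inv hU]
  exact exp_conj U A (.of_mul_eq_one _ hU)

theorem Matrix.mul_exp_eq_self_of_mul_eq_zero {P S : Matrix n n ℝ} (h : P * S = 0) :
    P * exp S = P := by
  -- `exp` depends only on the topology; any algebra norm inducing it unlocks the normed API.
  let : NormedRing (Matrix n n ℝ) := Matrix.linftyOpNormedRing
  let : NormedAlgebra ℝ (Matrix n n ℝ) := Matrix.linftyOpNormedAlgebra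
  let : NormedAlgebra ℚ (Matrix n n ℝ) := .restrictScalars ℚ ℝ _
  have hPS : SemiconjBy P S 0 := by rw [SemiconjBy, h, zero_mul]
  have := hPS.exp_right
  rwa [SemiconjBy, exp_zero, one_mul] at this

theorem tendsto_exp_smul_diagonal_of_nonpos {d : n → ℝ} (hd : ∀ i, d i ≤ 0) :
    Tendsto (fun t : ℝ => exp (t • diagonal d)) atTop
      (𝓝 (diagonal fun i => if d i = 0 then 1 else 0)) := by
  have hlim : Tendsto (fun t : ℝ => fun i => Real.exp (t * d i)) atTop
      (𝓝 fun i => if d i = 0 then 1 else 0) := by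
    refine tendsto_pi_nhds.2 fun i => ?_
    rcases (hd i).eq_or_lt with h | h
    · simp [h]
    · rw [if_neg h.ne]
      exact Real.tendsto_exp_atBot.comp (tendsto_id.atTop_mul_const_of_neg h)
  simp_rw [← diagonal_smul, exp_diagonal, Pi.exp_def, ← Real.exp_eq_exp_ℝ]
  exact (continuous_id.matrix_diagonal.tendsto _).comp hlim

theorem tendsto_exp_smul_add_of_transpose_eq_neg {D S P : Matrix n n ℝ} (hDS : Commute D S)
    (hS : Sᵀ = -S) (hPS : P * S = 0) (hD : Tendsto (fun t : ℝ => exp (t • D)) atTop (𝓝 P)) :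
    Tendsto (fun t : ℝ => exp (t • (D + S))) atTop (𝓝 P) := by
  have hsplit : ∀ t : ℝ, exp (t • (D + S)) = (exp (t • D) - P) * exp (t • S) + P := fun t => by
    rw [sub_mul, mul_exp_eq_self_of_mul_eq_zero (P := P) (by rw [mul_smul_comm, hPS, smul_zero]),
      sub_add_cancel, smul_add, exp_add_of_commute _ _ ((hDS.smul_left t).smul_right t)]
  open scoped Matrix.Norms.L2Operator in
  have hdecay : Tendsto (fun t : ℝ => (exp (t • D) - P) * exp (t • S)) atTop (𝓝 0) := by
    have hrot (t : ℝ) : ‖(exp (t • D) - P) * exp (t • S)‖ = ‖exp (t • D) - P‖ :=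
      CStarRing.norm_mul_mem_unitary _
        (exp_mem_orthogonalGroup_of_transpose_eq_neg (by rw [transpose_smul, hS, smul_neg]))
    rw [tendsto_zero_iff_norm_tendsto_zero]
    simp_rw [hrot, ← tendsto_zero_iff_norm_tendsto_zero]
    exact tendsto_sub_nhds_zero_iff.2 hD
  simpa only [hsplit, zero_add] using hdecay.add_const P

end

def exMatS : Matrix (Fin 3) (Fin 3) ℝ := !![0, 0, 0; 0, 0, -1; 0, 1, 0]

def exMatP : Matrix (Fin 3) (Fin 3) ℝ := diagonal ![1, 0, 0]

lemma exMatR_eq_diagonal_add_exMatS : exMatR = diagonal ![0, -1, -1] + exMatS := by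
  ext i j; fin_cases i <;> fin_cases j <;> simp [exMatR, exMatS]

lemma commute_diagonal_exMatS : Commute (diagonal ![0, -1, -1]) exMatS := by
  ext i j; fin_cases i <;> fin_cases j <;> simp [exMatS, mul_apply, Fin.sum_univ_three]

lemma exMatS_transpose : exMatSᵀ = -exMatS := by
  ext i j; fin_cases i <;> fin_cases j <;> simp [exMatS]

lemma exMatP_mul_exMatS : exMatP * exMatS = 0 := by
  ext i j; fin_cases i <;> fin_cases j <;> simp [exMatP, exMatS]

lemma tendsto_exp_smul_diagonal_exMatP :
    Tendsto (fun t : ℝ => exp (t • diagonal ![0, -1, -1])) atTop (𝓝 exMatP) := by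
  convert tendsto_exp_smul_diagonal_of_nonpos (d := ![0, -1, -1])
    (fun i => by fin_cases i <;> norm_num) using 2
  rw [exMatP]
  congr 1
  ext i; fin_cases i <;> simp

lemma exVecV_mul_transpose : exVecV * exVecVᵀ = 1 := by
  ext i j; fin_cases i <;> fin_cases j <;>
    simp [exVecV, mul_apply, Fin.sum_univ_three, one_apply] <;> ring_nf <;>
    simp [inv_pow, Real.sq_sqrt] <;> norm_num

lemma exVecV_mul_exMatP_mul_transpose :
    exVecV * exMatP * exVecVᵀ = of fun _ _ : Fin 3 => (1 / 3 : ℝ) := by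
  ext i j; fin_cases i <;> fin_cases j <;>
    simp [exVecV, exMatP, mul_apply, vecMul_diagonal, Fin.sum_univ_three] <;> ring_nf <;>
    simp [inv_pow, Real.sq_sqrt]

/-- For `A = V R Vᵀ` with `V` the orthogonal matrix with columns
`v₁ = (1/√3)(1,1,1)`, `v₂ = (1/√2)(-1,0,1)`, `v₃ = (1/√6)(1,-2,1)` and
`R = !![0,0,0; 0,-1,-1; 0,1,-1]`, the matrix `exp (t • A)` converges, as `t → ∞`,
to the matrix all of whose entries equal `1/3` (that is, to `v₁ v₁ᵀ`). -/
theorem exp_smul_tendsto_third_matrix :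
    Tendsto (fun t : ℝ => exp (t • (exVecV * exMatR * exVecVᵀ)))
      atTop (nhds (Matrix.of fun _ _ : Fin 3 => (1 / 3 : ℝ))) := by
  have hR : Tendsto (fun t : ℝ => exp (t • exMatR)) atTop (𝓝 exMatP) := by
    rw [exMatR_eq_diagonal_add_exMatS]
    exact tendsto_exp_smul_add_of_transpose_eq_neg commute_diagonal_exMatS exMatS_transpose
      exMatP_mul_exMatS tendsto_exp_smul_diagonal_exMatP
  have hconj : Continuous fun M : Matrix (Fin 3) (Fin 3) ℝ => exVecV * M * exVecVᵀ := by
    fun_prop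
  rw [← exVecV_mul_exMatP_mul_transpose]
  refine (hconj.tendsto exMatP |>.comp hR).congr fun t => ?_
  rw [Function.comp_apply, ← exp_conj_of_mul_transpose_eq_one exVecV_mul_transpose,
    mul_smul_comm, smul_mul_assoc]
end

section
/- Let d be a positive integer and let A be a real d×d matrix. Suppose that the family (exp(tA))_{t ≥ 0} is individually eventually positive, i.e., for every vector u₀ ∈ ℝ^d with all entries ≥ 0 there exists a time t₀ ≥ 0 such that for all t ≥ t₀ all entries of exp(tA)·u₀ are ≥ 0. Then the family is uniformly eventually positive: there exists a single time t₀ ≥ 0 such that for all t ≥ t₀ all entries of the matrix exp(tA) are ≥ 0. -/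
open NormedSpace Matrix Filter

/-! Testing with the basis vector `Pi.single k 1` shows that the `k`-th column of `exp (t • A)`
is eventually nonnegative; there are finitely many columns, so one time works for all. -/

theorem Filter.Eventually.exists_ge_forall_of_atTop {α : Type*} [SemilatticeSup α]
    [Nonempty α] {p : α → Prop} (h : ∀ᶠ x in atTop, p x) (a : α) :
    ∃ b, a ≤ b ∧ ∀ x, b ≤ x → p x := by
  obtain ⟨b, hb⟩ := eventually_atTop.1 h
  exact ⟨a ⊔ b, le_sup_left, fun x hx => hb x (le_sup_right.trans hx)⟩

theorem Matrix.eventually_nonneg_of_eventually_mulVec_single_nonneg {ι m n R : Type*}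
    [Fintype n] [DecidableEq n] [NonAssocSemiring R] [Preorder R] {l : Filter ι}
    {M : ι → Matrix m n R} (h : ∀ k, ∀ᶠ t in l, ∀ j, 0 ≤ (M t *ᵥ Pi.single k 1) j) :
    ∀ᶠ t in l, ∀ j k, 0 ≤ M t j k := by
  filter_upwards [eventually_all.2 h] with t ht j k
  simpa [mulVec_single_one] using ht k j

theorem uniformly_eventually_positive_of_individually_general
    (d : ℕ) (A : Matrix (Fin d) (Fin d) ℝ)
    (hind : ∀ u₀ : Fin d → ℝ, (∀ i, 0 ≤ u₀ i) →
      ∃ t₀ : ℝ, 0 ≤ t₀ ∧ ∀ t : ℝ, t₀ ≤ t → ∀ i, 0 ≤ (exp (t • A)).mulVec u₀ i) :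
    ∃ t₀ : ℝ, 0 ≤ t₀ ∧ ∀ t : ℝ, t₀ ≤ t → ∀ j k : Fin d, 0 ≤ exp (t • A) j k := by
  refine (eventually_nonneg_of_eventually_mulVec_single_nonneg fun k => ?_)
    |>.exists_ge_forall_of_atTop 0
  have hk : (0 : Fin d → ℝ) ≤ Pi.single k 1 := Pi.single_nonneg.2 zero_le_one
  obtain ⟨t₀, -, ht₀⟩ := hind (Pi.single k 1) hk
  exact eventually_atTop.2 ⟨t₀, ht₀⟩

/-- In finite dimensions, individual eventual positivity of the matrix exponential family
implies uniform eventual positivity: if for every entrywise nonnegative `u₀ ∈ ℝ^d` there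
is a `t₀ ≥ 0` with `exp (t • A) *ᵥ u₀` entrywise nonnegative for all `t ≥ t₀`, then there
is a single `t₀ ≥ 0` such that all entries of `exp (t • A)` are nonnegative for all
`t ≥ t₀`. -/
theorem uniformly_eventually_positive_of_individually
    (d : ℕ) (hd : 0 < d) (A : Matrix (Fin d) (Fin d) ℝ)
    (hind : ∀ u₀ : Fin d → ℝ, (∀ i, 0 ≤ u₀ i) →
      ∃ t₀ : ℝ, 0 ≤ t₀ ∧ ∀ t : ℝ, t₀ ≤ t → ∀ i, 0 ≤ (exp (t • A)).mulVec u₀ i) :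
    ∃ t₀ : ℝ, 0 ≤ t₀ ∧ ∀ t : ℝ, t₀ ≤ t → ∀ j k : Fin d, 0 ≤ exp (t • A) j k :=
  uniformly_eventually_positive_of_individually_general d A hind
end
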